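/- Let B, X be Wajsberg hoops and let (f, g) be a strong external action of B on X satisfying additionally condition (W2): g_{b₂→b₁}(x → y) → y = g_{b₁→b₂}(y → x) → x for all b₁, b₂ ∈ B and x, y ∈ X. Then the hoop Y' = {(x, b) ∈ X × B | f_b(x) = x}, with operations (x, b) → (y, b') = (g_{b'→b}(x → y), b → b') and (x, b) · (y, b') = (f_{b·b'}(x · y), b · b'), is a Wajsberg hoop, i.e. ((u → v) → v) = ((v → u) → u) for all u, v ∈ Y'. -/

import Mathlib

class Hoop (α : Type*) extends CommMonoid α, HImp α where
  himp_self : ∀ x : α, x ⇨ x = 1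
  mul_himp_comm : ∀ x y : α, x * (x ⇨ y) = y * (y ⇨ x)
  mul_himp_assoc : ∀ x y z : α, (x * y) ⇨ z = x ⇨ (y ⇨ z)

/-- A Wajsberg hoop: a hoop satisfying `(x → y) → y = (y → x) → x`. -/
class WajsbergHoop (α : Type*) extends Hoop α where
  waj : ∀ x y : α, (x ⇨ y) ⇨ y = (y ⇨ x) ⇨ x

/-- The multiplication of the semidirect product of a strong external action. -/
def Amul {B X : Type*} [Hoop B] [Hoop X] (f : B → X → X) (q r : X × B) : X × B :=
  (f (q.2 * r.2) (q.1 * r.1), q.2 * r.2)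

/-- The implication of the semidirect product of a strong external action. -/
def Aimp {B X : Type*} [Hoop B] [Hoop X] (g : B → X → X) (q r : X × B) : X × B :=
  (g (r.2 ⇨ q.2) (q.1 ⇨ r.1), q.2 ⇨ r.2)

/-- Membership in `Y' = {(x,b) ∈ X × B | f_b(x) = x}`. -/
def memY {B X : Type*} [Hoop B] [Hoop X] (f : B → X → X) (q : X × B) : Prop :=
  f q.2 q.1 = q.1

/-!
In `(x, b) → (y, c)` the index of `g` is `c → b`, and applying `· → (y, c)` once more produces
the index `c → (b → c)`, which is `1` in every hoop. So, by (E2) for `g`, the first coordinate of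
`((x, b) → (y, c)) → (y, c)` is `g_{c→b}(x → y) → y`, and the identity splits into (W2) in the
first coordinate and the Wajsberg identity of `B` in the second.
-/

namespace Hoop

variable {α : Type*} [Hoop α]

theorem one_himp_himp (y z : α) : 1 ⇨ (y ⇨ z) = y ⇨ z := by
  rw [← mul_himp_assoc, one_mul]

theorem himp_one_himp_one (x : α) : (x ⇨ 1) ⇨ 1 = 1 := by
  have h : ∀ y : α, (1 ⇨ y) ⇨ 1 = 1 := fun y =>
    calc (1 ⇨ y) ⇨ 1 = ((y ⇨ 1) * y) ⇨ 1 := by rw [← one_mul (1 ⇨ y), mul_himp_comm, mul_comm]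
      _ = 1 := by rw [mul_himp_assoc, himp_self]
  simpa only [one_himp_himp] using h (x ⇨ 1)

theorem one_himp_himp_self (x : α) : (1 ⇨ x) ⇨ x = 1 :=
  calc (1 ⇨ x) ⇨ x = (1 * (1 ⇨ x)) ⇨ x := by rw [one_mul]
    _ = ((x ⇨ 1) * x) ⇨ x := by rw [mul_himp_comm, mul_comm]
    _ = 1 := by rw [mul_himp_assoc, himp_self, himp_one_himp_one]

theorem one_himp (x : α) : 1 ⇨ x = x := by
  have h := mul_himp_comm (1 ⇨ x) x
  rwa [one_himp_himp_self, ← mul_himp_assoc, mul_one, mul_one, himp_self, mul_one] at h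

theorem himp_one (x : α) : x ⇨ 1 = 1 := by
  have hx : x * (x ⇨ 1) = x := by rw [mul_himp_comm, one_mul, one_himp]
  calc x ⇨ 1 = (x * (x ⇨ 1)) ⇨ 1 := by rw [hx]
    _ = 1 := by rw [mul_comm, mul_himp_assoc, himp_self]

theorem himp_himp_self (a b : α) : a ⇨ (b ⇨ a) = 1 := by
  rw [← mul_himp_assoc, mul_comm, mul_himp_assoc, himp_self, himp_one]

end Hoop

theorem Aimp_Aimp_self {B X : Type*} [Hoop B] [Hoop X] (g : B → X → X)
    (hg : ∀ x : X, g 1 x = x) (u v : X × B) :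
    Aimp g (Aimp g u v) v = (g (v.2 ⇨ u.2) (u.1 ⇨ v.1) ⇨ v.1, (u.2 ⇨ v.2) ⇨ v.2) := by
  simp only [Aimp, Hoop.himp_himp_self, hg]

theorem stmt12_general {B X : Type*} [WajsbergHoop B] [WajsbergHoop X] (f g : B → X → X)
    (E2g : ∀ x : X, g 1 x = x)
    (W2 : ∀ (b₁ b₂ : B) (x y : X),
      g (b₂ ⇨ b₁) (x ⇨ y) ⇨ y = g (b₁ ⇨ b₂) (y ⇨ x) ⇨ x) :
    ∀ u v : X × B, memY f u → memY f v →
      Aimp g (Aimp g u v) v = Aimp g (Aimp g v u) u := by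
  rintro ⟨x, b⟩ ⟨y, c⟩ - -
  rw [Aimp_Aimp_self g E2g, Aimp_Aimp_self g E2g, W2 b c x y, WajsbergHoop.waj b c]

/-- For a strong external action `(f,g)` of a Wajsberg hoop `B` on a Wajsberg hoop `X`
satisfying additionally condition (W2), the semidirect product hoop
`Y' = {(x,b) | f_b(x) = x}` is a Wajsberg hoop: `(u → v) → v = (v → u) → u`
for all `u, v ∈ Y'`. -/
theorem stmt12 {B X : Type*} [WajsbergHoop B] [WajsbergHoop X] (f g : B → X → X)
    (E1f : ∀ b : B, f b 1 = 1) (E1g : ∀ b : B, g b 1 = 1)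
    (E2f : ∀ x : X, f 1 x = x) (E2g : ∀ x : X, g 1 x = x)
    (E3 : ∀ (b₁ b₂ : B) (x y : X),
      f (b₁ * b₂) (x * g b₁ (x ⇨ y)) = f (b₁ * b₂) (x * (x ⇨ y)))
    (E4 : ∀ (b₁ b₂ b₃ : B) (x y z : X),
      g (b₃ ⇨ (b₁ * b₂)) (f (b₁ * b₂) (x * y) ⇨ z)
        = g ((b₂ ⇨ b₃) ⇨ b₁) (x ⇨ g (b₃ ⇨ b₂) (y ⇨ z)))
    (W2 : ∀ (b₁ b₂ : B) (x y : X),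
      g (b₂ ⇨ b₁) (x ⇨ y) ⇨ y = g (b₁ ⇨ b₂) (y ⇨ x) ⇨ x) :
    ∀ u v : X × B, memY f u → memY f v →
      Aimp g (Aimp g u v) v = Aimp g (Aimp g v u) u :=
  stmt12_general f g E2g W2
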